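/- Let G be a finite simple connected graph on n vertices whose edge set E has exactly n elements (so that G is a uni-cyclic graph U_{n,m}), and let c be a cycle in G of length m (3 ≤ m ≤ n). For each i, let f_i denote the number of subsets of E of cardinality i+1 contained in the edge set of some spanning tree of G, and set f_{−1} = 1. Define the h-vector of the Stanley–Reisner ring k[Δ_s(U_{n,m})] by h_k = Σ_{i=0}^{k} (−1)^{k−i} C(n−1−i, k−i) f_{i−1}. Then h_k = 0 for k > n − 1, h_k = Σ_{i=0}^{k} (−1)^{k−i} C(n−1−i, k−i) C(n, i) for 0 ≤ k ≤ m − 1, and h_k = Σ_{i=0}^{k} (−1)^{k−i} C(n−1−i, k−i) [C(n, i) − C(n−m, i−m)] for m − 1 < k ≤ n − 1. -/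

import Mathlib

/-- `F` is a face of the spanning simplicial complex `Δ_s(G)`: `F` is contained
in the edge set of some spanning tree of `G`. -/
def IsSpanningFace {V : Type*} [Fintype V] [DecidableEq V]
    (G : SimpleGraph V) [DecidableRel G.Adj] (F : Finset (Sym2 V)) : Prop :=
  ∃ T : Finset (Sym2 V), T ⊆ G.edgeFinset ∧
    (SimpleGraph.fromEdgeSet (↑T : Set (Sym2 V))).IsTree ∧ F ⊆ T

/-- The binomial coefficient `C(a, b)` for integer arguments, with the
convention that `C(a, b) = 0` when `b < 0` or `b > a`. -/
def intChoose (a b : ℤ) : ℤ :=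
  if 0 ≤ b ∧ b ≤ a then (a.toNat.choose b.toNat : ℤ) else 0

/-!
Deleting an edge of the cycle from a connected graph with as many edges as vertices keeps it
connected (the edge is not a bridge) and leaves `|V| - 1` edges, so it yields a spanning tree;
conversely no spanning tree contains the whole cycle. Hence the faces of `Δ_s(G)` are exactly the
edge sets not containing the `m` cycle edges, and there are `C(n, i) - C(n - m, i - m)` of size `i`.
Substituting this into the defining sum of `h_k` gives the three cases: for `k ≥ n` every
`C(n - 1 - i, k - i)` vanishes, and for `k < m` every correction term `C(n - m, i - m)` does.
-/

open Finset

lemma intChoose_natCast (a b : ℕ) : intChoose a b = a.choose b := by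
  unfold intChoose
  split_ifs with h
  · simp
  · rw [Nat.choose_eq_zero_of_lt (by omega), Nat.cast_zero]

lemma intChoose_of_neg {a b : ℤ} (hb : b < 0) : intChoose a b = 0 :=
  if_neg fun h => hb.not_ge h.1

lemma intChoose_of_lt {a b : ℤ} (hab : a < b) : intChoose a b = 0 :=
  if_neg fun h => hab.not_ge h.2

lemma Finset.card_filter_powersetCard_not_subset {α : Type*} [DecidableEq α]
    {s t : Finset α} (hst : s ⊆ t) (k : ℕ) :
    (#{u ∈ t.powersetCard k | ¬ s ⊆ u} : ℤ) =
      intChoose #t k - intChoose ((#t : ℤ) - #s) ((k : ℤ) - #s) := by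
  have hsplit := card_filter_add_card_filter_not (s := t.powersetCard k) (s ⊆ ·)
  rw [card_powersetCard] at hsplit
  rw [intChoose_natCast, ← hsplit, Nat.cast_add]
  rcases le_or_gt #s k with hsk | hks
  · rw [card_filter_powersetCard_subset s t k hst hsk, ← Nat.cast_sub (card_le_card hst),
      ← Nat.cast_sub hsk, intChoose_natCast]
    ring
  · have hnone : #{u ∈ t.powersetCard k | s ⊆ u} = 0 := by
      refine card_eq_zero.2 (filter_eq_empty_iff.2 fun u hu hsu => ?_)
      have := card_le_card hsu
      rw [(mem_powersetCard.1 hu).2] at this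
      omega
    rw [hnone, intChoose_of_neg (by omega)]
    ring

namespace SimpleGraph

variable {V : Type*} {G : SimpleGraph V}

lemma Connected.isTree_deleteEdges_of_mem_cycle [Finite V] (hG : G.Connected)
    (hcard : Nat.card G.edgeSet = Nat.card V) {u : V} {c : G.Walk u u} (hc : c.IsCycle)
    {e : Sym2 V} (he : e ∈ c.edges) : (G.deleteEdges {e}).IsTree := by
  induction e using Sym2.ind with
  | _ x y =>
  have hbr : ¬ G.IsBridge s(x, y) := fun hb => hb.notMem_edges_of_isCycle hc he
  rw [isTree_iff_connected_and_card, edgeSet_deleteEdges, Nat.card_coe_set_eq,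
    Set.ncard_sdiff_singleton_add_one (c.edges_subset_edgeSet he) G.edgeSet.toFinite,
    ← Nat.card_coe_set_eq, hcard]
  exact ⟨hG.connected_delete_edge_of_not_isBridge hbr, rfl⟩

end SimpleGraph

open SimpleGraph

section SpanningFace

variable {V : Type*} [Fintype V] [DecidableEq V] {G : SimpleGraph V} [DecidableRel G.Adj]

lemma IsSpanningFace.not_edges_subset {F : Finset (Sym2 V)} (hF : IsSpanningFace G F)
    {u : V} {c : G.Walk u u} (hc : c.IsCycle) : ¬ c.edges.toFinset ⊆ F := by
  obtain ⟨T, hTG, hT, hFT⟩ := hF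
  intro hcF
  refine hT.isAcyclic _ (hc.transfer fun e he => ?_)
  rw [edgeSet_fromEdgeSet]
  exact ⟨hFT (hcF (List.mem_toFinset.2 he)),
    G.not_isDiag_of_mem_edgeSet (c.edges_subset_edgeSet he)⟩

lemma isSpanningFace_iff_not_edges_subset (hG : G.Connected)
    (hcard : #G.edgeFinset = Fintype.card V) {u : V} {c : G.Walk u u} (hc : c.IsCycle)
    (F : Finset (Sym2 V)) :
    IsSpanningFace G F ↔ F ⊆ G.edgeFinset ∧ ¬ c.edges.toFinset ⊆ F := by
  refine ⟨fun hF => ⟨?_, hF.not_edges_subset hc⟩, fun ⟨hFG, hcF⟩ => ?_⟩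
  · obtain ⟨T, hTG, -, hFT⟩ := hF
    exact hFT.trans hTG
  obtain ⟨e, he, heF⟩ := not_subset.1 hcF
  refine ⟨G.edgeFinset.erase e, erase_subset _ _, ?_, fun x hx => mem_erase.2 ⟨?_, hFG hx⟩⟩
  · have hdel : fromEdgeSet ↑(G.edgeFinset.erase e) = G.deleteEdges {e} := by
      rw [coe_erase, coe_edgeFinset, fromEdgeSet_sdiff, fromEdgeSet_edgeSet, deleteEdges]
    rw [hdel]
    refine hG.isTree_deleteEdges_of_mem_cycle ?_ hc (List.mem_toFinset.1 he)
    rw [Nat.card_eq_fintype_card, ← edgeFinset_card, hcard, Nat.card_eq_fintype_card]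
  · rintro rfl
    exact heF hx

lemma ncard_setOf_isSpanningFace_card_eq (hG : G.Connected)
    (hcard : #G.edgeFinset = Fintype.card V) {u : V} {c : G.Walk u u} (hc : c.IsCycle)
    (k : ℕ) :
    ({F : Finset (Sym2 V) | IsSpanningFace G F ∧ F.card = k}.ncard : ℤ) =
      intChoose #G.edgeFinset k -
        intChoose ((#G.edgeFinset : ℤ) - c.length) ((k : ℤ) - c.length) := by
  have hfaces : {F : Finset (Sym2 V) | IsSpanningFace G F ∧ F.card = k} =
      ↑{F ∈ G.edgeFinset.powersetCard k | ¬ c.edges.toFinset ⊆ F} := by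
    ext F
    simp only [Set.mem_ofPred_eq, coe_filter, mem_powersetCard,
      isSpanningFace_iff_not_edges_subset hG hcard hc]
    tauto
  have hcG : c.edges.toFinset ⊆ G.edgeFinset := fun e he =>
    mem_edgeFinset.2 (c.edges_subset_edgeSet (List.mem_toFinset.1 he))
  rw [hfaces, Set.ncard_coe_finset, card_filter_powersetCard_not_subset hcG,
    List.toFinset_card_of_nodup hc.edges_nodup, c.length_edges]

end SpanningFace

theorem hvector_of_unicyclic_general
    {V : Type*} [Fintype V] [DecidableEq V] (n m : ℕ)
    (G : SimpleGraph V) [DecidableRel G.Adj]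
    (hconn : G.Connected)
    (hV : Fintype.card V = n)
    (hE : G.edgeFinset.card = n)
    (v : V) (c : G.Walk v v) (hc : c.IsCycle) (hmc : c.length = m)
    (f : ℤ → ℤ)
    (hfneg : f (-1) = 1)
    (hf : ∀ i : ℕ, f i =
      ({F : Finset (Sym2 V) | IsSpanningFace G F ∧ F.card = i + 1}.ncard : ℤ))
    (h : ℕ → ℤ)
    (hh : ∀ k : ℕ, h k = ∑ i ∈ Finset.range (k + 1),
      (-1 : ℤ) ^ (k - i) * intChoose ((n : ℤ) - 1 - i) ((k : ℤ) - i) * f ((i : ℤ) - 1)) :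
    (∀ k : ℕ, n - 1 < k → h k = 0) ∧
    (∀ k : ℕ, k ≤ m - 1 → h k = ∑ i ∈ Finset.range (k + 1),
      (-1 : ℤ) ^ (k - i) * intChoose ((n : ℤ) - 1 - i) ((k : ℤ) - i) *
        intChoose (n : ℤ) (i : ℤ)) ∧
    (∀ k : ℕ, m - 1 < k → k ≤ n - 1 → h k = ∑ i ∈ Finset.range (k + 1),
      (-1 : ℤ) ^ (k - i) * intChoose ((n : ℤ) - 1 - i) ((k : ℤ) - i) *
        (intChoose (n : ℤ) (i : ℤ) - intChoose ((n : ℤ) - m) ((i : ℤ) - m))) := by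
  have hm : 3 ≤ m := hmc ▸ hc.three_le_length
  have hface : ∀ i : ℕ,
      f ((i : ℤ) - 1) = intChoose n i - intChoose ((n : ℤ) - m) ((i : ℤ) - m) := by
    rintro (_ | i)
    · rw [intChoose_natCast, Nat.choose_zero_right, intChoose_of_neg (by omega)]
      simpa using hfneg
    · rw [Nat.cast_succ, add_sub_cancel_right, hf, ← hE, ← hmc]
      exact_mod_cast ncard_setOf_isSpanningFace_card_eq hconn (hE.trans hV.symm) hc (i + 1)
  refine ⟨fun k hk => ?_, fun k hk => ?_, fun k _ _ => ?_⟩ <;> rw [hh]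
  · exact sum_eq_zero fun i _ => by rw [intChoose_of_lt (by omega), mul_zero, zero_mul]
  · refine sum_congr rfl fun i hi => ?_
    rw [hface, intChoose_of_neg (a := (n : ℤ) - m) (by grind), sub_zero]
  · exact sum_congr rfl fun i _ => by rw [hface]

/-- **`h`-vector of `k[Δ_s(U_{n,m})]`.**
Let `G` be a uni-cyclic graph `U_{n,m}` (a finite simple connected graph on `n`
vertices with exactly `n` edges) with cycle of length `m` (`3 ≤ m ≤ n`). Let
`f i` (for `i ≥ 0`) be the number of faces of `Δ_s(U_{n,m})` of cardinality
`i + 1`, with `f (-1) = 1`, and let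
`h k = ∑_{i=0}^{k} (-1)^{k-i} C(n-1-i, k-i) f (i-1)` be the `h`-vector of the
Stanley–Reisner ring `k[Δ_s(U_{n,m})]`. Then `h k = 0` for `k > n - 1`,
`h k = ∑_{i=0}^{k} (-1)^{k-i} C(n-1-i, k-i) C(n, i)` for `k ≤ m - 1`, and
`h k = ∑_{i=0}^{k} (-1)^{k-i} C(n-1-i, k-i) (C(n, i) - C(n-m, i-m))` for
`m - 1 < k ≤ n - 1`. -/
theorem hvector_of_unicyclic
    {V : Type*} [Fintype V] [DecidableEq V] (n m : ℕ)
    (hm3 : 3 ≤ m) (hmn : m ≤ n)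
    (G : SimpleGraph V) [DecidableRel G.Adj]
    (hconn : G.Connected)
    (hV : Fintype.card V = n)
    (hE : G.edgeFinset.card = n)
    (v : V) (c : G.Walk v v) (hc : c.IsCycle) (hmc : c.length = m)
    (f : ℤ → ℤ)
    (hfneg : f (-1) = 1)
    (hf : ∀ i : ℕ, f i =
      ({F : Finset (Sym2 V) | IsSpanningFace G F ∧ F.card = i + 1}.ncard : ℤ))
    (h : ℕ → ℤ)
    (hh : ∀ k : ℕ, h k = ∑ i ∈ Finset.range (k + 1),
      (-1 : ℤ) ^ (k - i) * intChoose ((n : ℤ) - 1 - i) ((k : ℤ) - i) * f ((i : ℤ) - 1)) :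
    (∀ k : ℕ, n - 1 < k → h k = 0) ∧
    (∀ k : ℕ, k ≤ m - 1 → h k = ∑ i ∈ Finset.range (k + 1),
      (-1 : ℤ) ^ (k - i) * intChoose ((n : ℤ) - 1 - i) ((k : ℤ) - i) *
        intChoose (n : ℤ) (i : ℤ)) ∧
    (∀ k : ℕ, m - 1 < k → k ≤ n - 1 → h k = ∑ i ∈ Finset.range (k + 1),
      (-1 : ℤ) ^ (k - i) * intChoose ((n : ℤ) - 1 - i) ((k : ℤ) - i) *
        (intChoose (n : ℤ) (i : ℤ) - intChoose ((n : ℤ) - m) ((i : ℤ) - m))) :=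
  hvector_of_unicyclic_general n m G hconn hV hE v c hc hmc f hfneg hf h hh
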